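/- (Lemma 4.3, invertibility) If E(X^h) − E(Y) < (λ_k − λ_{k+1})/k, then the k×k matrix C^h is invertible. -/

import Mathlib

/-!
Because `Xᵀ B X = 1`, the coordinate matrix `C` of `Y = X C` has orthonormal columns. Hence the
squared row norms `rᵢ = ‖C i‖²` lie in `[0, 1]` and add up to the number `k` of columns, and
`E(Y) = ∑ λᵢ rᵢ / k` while `E(Xʰ) = ∑_{i ≤ k} λᵢ / k`. Moving weight `rᵢ` from the top rows to the
bottom rows costs at least the gap, so `E(Xʰ) − E(Y) ≥ (λ_k − λ_{k+1}) ‖Cˡ‖_F² / k`. If `Cʰ v = 0`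
for a unit vector `v`, then `1 = ‖C v‖² = ‖Cˡ v‖² ≤ ‖Cˡ‖_F²` by Cauchy–Schwarz, which contradicts
the hypothesis on the energies.
-/

open Matrix

noncomputable def energy {n k : Type*} [Fintype n] [Fintype k]
    (A B : Matrix n n ℝ) (Z : Matrix n k ℝ) : ℝ :=
  (Zᵀ * A * Z).trace / (Zᵀ * B * Z).trace

lemma sq_dotProduct_le_dotProduct_self_mul {κ : Type*} [Fintype κ] (u v : κ → ℝ) :
    (u ⬝ᵥ v) ^ 2 ≤ (u ⬝ᵥ u) * (v ⬝ᵥ v) := by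
  simpa only [dotProduct, ← sq] using Finset.sum_mul_sq_le_sq_mul_sq Finset.univ u v

section OrthonormalColumns

variable {ι κ : Type*} [Fintype ι] [Fintype κ] [DecidableEq κ] {C : Matrix ι κ ℝ}

lemma dotProduct_mulVec_self_of_transpose_mul_self_eq_one (hC : Cᵀ * C = 1) (v : κ → ℝ) :
    (C *ᵥ v) ⬝ᵥ (C *ᵥ v) = v ⬝ᵥ v := by
  rw [dotProduct_mulVec, ← mulVec_transpose, mulVec_mulVec, hC, one_mulVec]

lemma row_dotProduct_self_le_one (hC : Cᵀ * C = 1) (i : ι) : C i ⬝ᵥ C i ≤ 1 := by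
  set r := C i ⬝ᵥ C i
  have hr : r * r ≤ r := calc
    r * r = (C *ᵥ C i) i * (C *ᵥ C i) i := rfl
    _ ≤ (C *ᵥ C i) ⬝ᵥ (C *ᵥ C i) :=
      Finset.single_le_sum (f := fun j ↦ (C *ᵥ C i) j * (C *ᵥ C i) j)
        (fun j _ ↦ mul_self_nonneg _) (Finset.mem_univ i)
    _ = r := dotProduct_mulVec_self_of_transpose_mul_self_eq_one hC _
  nlinarith

lemma sum_row_dotProduct_self (hC : Cᵀ * C = 1) :
    ∑ i, C i ⬝ᵥ C i = Fintype.card κ := by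
  have : ∑ i, C i ⬝ᵥ C i = (C * Cᵀ).trace := by
    simp only [trace, diag, mul_apply, transpose_apply, dotProduct]
  rw [this, trace_mul_comm, hC, trace_one]

end OrthonormalColumns

lemma trace_transpose_mul_diagonal_mul {ι κ : Type*} [Fintype ι] [Fintype κ] [DecidableEq ι]
    (C : Matrix ι κ ℝ) (d : ι → ℝ) :
    (Cᵀ * diagonal d * C).trace = ∑ i, d i * (C i ⬝ᵥ C i) := by
  rw [trace_mul_cycle]
  refine Finset.sum_congr rfl fun i _ ↦ ?_
  rw [diag_apply, mul_diagonal, mul_comm]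
  rfl

lemma one_le_sum_inr_dotProduct_self_of_not_isUnit {κ ν : Type*} [Fintype κ] [DecidableEq κ]
    [Fintype ν] {C : Matrix (κ ⊕ ν) κ ℝ} (hC : Cᵀ * C = 1)
    (hsing : ¬ IsUnit (C.submatrix Sum.inl id)) :
    1 ≤ ∑ l, C (Sum.inr l) ⬝ᵥ C (Sum.inr l) := by
  rw [isUnit_iff_isUnit_det, isUnit_iff_ne_zero, not_not] at hsing
  obtain ⟨v, hv0, hv⟩ := exists_mulVec_eq_zero_iff.2 hsing
  have hinl (i : κ) : (C *ᵥ v) (Sum.inl i) = 0 := congrFun hv i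
  have hpos : 0 < v ⬝ᵥ v :=
    (Finset.sum_nonneg fun j _ ↦ mul_self_nonneg (v j)).lt_of_ne
      (Ne.symm (mt dotProduct_self_eq_zero.1 hv0))
  have : v ⬝ᵥ v ≤ (∑ l, C (Sum.inr l) ⬝ᵥ C (Sum.inr l)) * (v ⬝ᵥ v) := calc
    v ⬝ᵥ v = (C *ᵥ v) ⬝ᵥ (C *ᵥ v) := (dotProduct_mulVec_self_of_transpose_mul_self_eq_one hC v).symm
    _ = ∑ l, (C (Sum.inr l) ⬝ᵥ v) ^ 2 := by
      simp only [dotProduct, Fintype.sum_sum_type, hinl, mul_zero, Finset.sum_const_zero,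
        zero_add, sq]
      rfl
    _ ≤ ∑ l, (C (Sum.inr l) ⬝ᵥ C (Sum.inr l)) * (v ⬝ᵥ v) :=
      Finset.sum_le_sum fun l _ ↦ sq_dotProduct_le_dotProduct_self_mul _ _
    _ = _ := (Finset.sum_mul ..).symm
  exact le_of_mul_le_mul_right (by linarith) hpos

lemma sub_mul_sum_inr_le_sum_inl_sub_sum_mul {ι ι' : Type*} [Fintype ι] [Fintype ι']
    {lam r : ι ⊕ ι' → ℝ} {a b : ℝ}
    (ha : ∀ i, a ≤ lam (Sum.inl i)) (hb : ∀ l, lam (Sum.inr l) ≤ b)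
    (hr_le : ∀ i, r (Sum.inl i) ≤ 1) (hr_nonneg : ∀ l, 0 ≤ r (Sum.inr l))
    (hr_sum : ∑ i, r i = Fintype.card ι) :
    (a - b) * ∑ l, r (Sum.inr l) ≤ ∑ i, lam (Sum.inl i) - ∑ i, lam i * r i := by
  rw [Fintype.sum_sum_type] at hr_sum ⊢
  have hmass : ∑ l, r (Sum.inr l) = ∑ i, (1 - r (Sum.inl i)) := by
    rw [Finset.sum_sub_distrib, Finset.sum_const, Finset.card_univ, nsmul_one]
    linarith
  have hinl : a * ∑ l, r (Sum.inr l) ≤ ∑ i, lam (Sum.inl i) * (1 - r (Sum.inl i)) := by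
    rw [hmass, Finset.mul_sum]
    gcongr with i
    · linarith [hr_le i]
    · exact ha i
  have hinr : ∑ l, lam (Sum.inr l) * r (Sum.inr l) ≤ b * ∑ l, r (Sum.inr l) := by
    rw [Finset.mul_sum]
    gcongr with l
    · exact hr_nonneg l
    · exact hb l
  have hexpand : ∑ i, lam (Sum.inl i) * (1 - r (Sum.inl i)) =
      ∑ i, lam (Sum.inl i) - ∑ i, lam (Sum.inl i) * r (Sum.inl i) := by
    rw [← Finset.sum_sub_distrib]
    simp only [mul_sub, mul_one]
  linarith

lemma transpose_mul_mul_mul_eq {n m κ : Type*} [Fintype n] [Fintype m] (X : Matrix n m ℝ)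
    (C : Matrix m κ ℝ) (M : Matrix n n ℝ) :
    (X * C)ᵀ * M * (X * C) = Cᵀ * (Xᵀ * M * X) * C := by
  simp only [transpose_mul, Matrix.mul_assoc]

lemma transpose_submatrix_mul_mul_submatrix {n m κ : Type*} [Fintype n] (X : Matrix n m ℝ)
    (f : κ → m) (M : Matrix n n ℝ) :
    (X.submatrix id f)ᵀ * M * X.submatrix id f = (Xᵀ * M * X).submatrix f f := by
  ext
  simp [mul_apply, Finset.sum_mul]

section Energy

variable {n κ ν : Type*} [Fintype n] [Fintype κ] [DecidableEq κ] [DecidableEq ν]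
  {A B : Matrix n n ℝ} {X : Matrix n (κ ⊕ ν) ℝ} {lam : κ ⊕ ν → ℝ}

lemma energy_submatrix_inl (hXB : Xᵀ * B * X = 1) (hXA : Xᵀ * A * X = diagonal lam) :
    energy A B (X.submatrix id Sum.inl) = (∑ i, lam (Sum.inl i)) / Fintype.card κ := by
  rw [energy, transpose_submatrix_mul_mul_submatrix, transpose_submatrix_mul_mul_submatrix,
    hXA, hXB, submatrix_diagonal _ _ Sum.inl_injective, submatrix_one _ Sum.inl_injective,
    trace_diagonal, trace_one]
  rfl

lemma energy_mul [Fintype ν] (C : Matrix (κ ⊕ ν) κ ℝ) (hXA : Xᵀ * A * X = diagonal lam)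
    (hB : (X * C)ᵀ * B * (X * C) = 1) :
    energy A B (X * C) = (∑ i, lam i * (C i ⬝ᵥ C i)) / Fintype.card κ := by
  rw [energy, hB, trace_one, transpose_mul_mul_mul_eq, hXA, trace_transpose_mul_diagonal_mul]

end Energy

theorem stmt_8_general (k m : ℕ)
    (A B : Matrix (Fin (k+1) ⊕ Fin (m+1)) (Fin (k+1) ⊕ Fin (m+1)) ℝ)
    (lam : Fin (k+1) ⊕ Fin (m+1) → ℝ)
    (X : Matrix (Fin (k+1) ⊕ Fin (m+1)) (Fin (k+1) ⊕ Fin (m+1)) ℝ)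
    (hXB : Xᵀ * B * X = 1)
    (hXA : Xᵀ * A * X = Matrix.diagonal lam)
    (hmono_h : ∀ i j : Fin (k+1), i ≤ j → lam (Sum.inl j) ≤ lam (Sum.inl i))
    (hmono_l : ∀ i j : Fin (m+1), i ≤ j → lam (Sum.inr j) ≤ lam (Sum.inr i))
    (hgap : lam (Sum.inr 0) < lam (Sum.inl (Fin.last k)))
    (Y C : Matrix (Fin (k+1) ⊕ Fin (m+1)) (Fin (k+1)) ℝ)
    (hYB : Yᵀ * B * Y = 1)
    (hYC : Y = X * C)
    (hsmall : energy A B (X.submatrix id Sum.inl) - energy A B Y <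
      (lam (Sum.inl (Fin.last k)) - lam (Sum.inr 0)) / ((k : ℝ) + 1)) :
    IsUnit (C.submatrix Sum.inl id) := by
  subst hYC
  have hC : Cᵀ * C = 1 := by rwa [transpose_mul_mul_mul_eq, hXB, Matrix.mul_one] at hYB
  rw [energy_submatrix_inl hXB hXA, energy_mul C hXA hYB, div_sub_div_same,
    Fintype.card_fin, Nat.cast_succ, div_lt_div_iff_of_pos_right (by positivity)] at hsmall
  by_contra hsing
  have hlow_mass := one_le_sum_inr_dotProduct_self_of_not_isUnit hC hsing
  have hgap_bound := sub_mul_sum_inr_le_sum_inl_sub_sum_mul (r := fun i ↦ C i ⬝ᵥ C i)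
    (fun i ↦ hmono_h i _ (Fin.le_last i)) (fun l ↦ hmono_l 0 l (Fin.zero_le l))
    (fun i ↦ row_dotProduct_self_le_one hC _)
    (fun l ↦ Finset.sum_nonneg fun j _ ↦ mul_self_nonneg (C (Sum.inr l) j))
    (sum_row_dotProduct_self hC)
  linarith [mul_le_mul_of_nonneg_left hlow_mass (sub_nonneg.2 hgap.le)]

/-- Lemma 4.3 (invertibility): if `E(Xʰ) − E(Y) < (λ_k − λ_{k+1})/k`, then the
`k×k` matrix `Cʰ` is invertible.  The high block has size `k+1` and the low
block size `m+1`. -/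
theorem stmt_8 (k m : ℕ)
    (A B : Matrix (Fin (k+1) ⊕ Fin (m+1)) (Fin (k+1) ⊕ Fin (m+1)) ℝ)
    (hA : A.PosDef) (hB : B.PosDef)
    (lam : Fin (k+1) ⊕ Fin (m+1) → ℝ)
    (X : Matrix (Fin (k+1) ⊕ Fin (m+1)) (Fin (k+1) ⊕ Fin (m+1)) ℝ)
    (heig : A * X = B * X * Matrix.diagonal lam)
    (hXB : Xᵀ * B * X = 1)
    (hXA : Xᵀ * A * X = Matrix.diagonal lam)
    (hmono_h : ∀ i j : Fin (k+1), i ≤ j → lam (Sum.inl j) ≤ lam (Sum.inl i))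
    (hmono_l : ∀ i j : Fin (m+1), i ≤ j → lam (Sum.inr j) ≤ lam (Sum.inr i))
    (hgap : lam (Sum.inr 0) < lam (Sum.inl (Fin.last k)))
    (hpos : ∀ i, 0 < lam i)
    (Y C : Matrix (Fin (k+1) ⊕ Fin (m+1)) (Fin (k+1)) ℝ)
    (hYB : Yᵀ * B * Y = 1)
    (hYC : Y = X * C)
    (hsmall : energy A B (X.submatrix id Sum.inl) - energy A B Y <
      (lam (Sum.inl (Fin.last k)) - lam (Sum.inr 0)) / ((k : ℝ) + 1)) :
    IsUnit (C.submatrix Sum.inl id) :=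
  stmt_8_general k m A B lam X hXB hXA hmono_h hmono_l hgap Y C hYB hYC hsmall
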